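/- Let 𝔍 be a set of channels on d×d matrices such that every M ∈ 𝔍 maps incoherent states to incoherent states, and such that for every incoherent state σ the replacement channel τ ↦ Tr(τ)σ belongs to 𝔍 (this holds for each of SIO, IO, DIO and MIO). Then for every channel N and every probe state ρ, the advantage of ρ over incoherent probe states is bounded by its trace-norm coherence: p_succ(N, 𝔍, ρ) − p_succ(N, 𝔍, ℐ) ≤ (1/2)·C₁(ρ). -/

import Mathlib

open scoped Kronecker ComplexOrder

variable {ι : Type*} [Fintype ι] [DecidableEq ι]

/-- A quantum state: positive semidefinite matrix of trace one. -/
def IsState (ρ : Matrix ι ι ℂ) : Prop := ρ.PosSemidef ∧ ρ.trace = 1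

/-- The action of `id_n ⊗ N` on block matrices. -/
def idTensorMap (n : ℕ) (N : Matrix ι ι ℂ →ₗ[ℂ] Matrix ι ι ℂ)
    (M : Matrix (Fin n × ι) (Fin n × ι) ℂ) : Matrix (Fin n × ι) (Fin n × ι) ℂ :=
  Matrix.of fun p q => N (Matrix.of fun k l => M (p.1, k) (q.1, l)) p.2 q.2

/-- A quantum channel: completely positive trace preserving linear map. -/
structure Channel (ι : Type*) [Fintype ι] [DecidableEq ι] where
  map : Matrix ι ι ℂ →ₗ[ℂ] Matrix ι ι ℂ
  cp : ∀ (n : ℕ) (M : Matrix (Fin n × ι) (Fin n × ι) ℂ), M.PosSemidef →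
        (idTensorMap n map M).PosSemidef
  tp : ∀ A : Matrix ι ι ℂ, (map A).trace = A.trace

/-- The trace norm ‖A‖₁ = Tr √(AᴴA). -/
noncomputable def traceNorm (A : Matrix ι ι ℂ) : ℝ :=
  ((Matrix.posSemidef_conjTranspose_mul_self A).1.eigenvectorUnitary.1 *
    Matrix.diagonal (((↑) : ℝ → ℂ) ∘ (√·) ∘ (Matrix.posSemidef_conjTranspose_mul_self A).1.eigenvalues) *
    (star (Matrix.posSemidef_conjTranspose_mul_self A).1.eigenvectorUnitary : Matrix ι ι ℂ)).trace.re

/-- Trace-norm resource measure ω₁. -/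
noncomputable def omega1 (F : Set (Matrix ι ι ℂ)) (ρ : Matrix ι ι ℂ) : ℝ :=
  (1/2) * sInf ((fun σ => traceNorm (ρ - σ)) '' F)

/-- Trace-norm resource generating power Ω₁. -/
noncomputable def genPower1 (F : Set (Matrix ι ι ℂ)) (N : Matrix ι ι ℂ → Matrix ι ι ℂ) : ℝ :=
  sSup ((fun ρ => omega1 F (N ρ)) '' F)

/-- Trace-norm resource increasing power Ω̃₁. -/
noncomputable def incPower1 (F : Set (Matrix ι ι ℂ)) (N : Matrix ι ι ℂ → Matrix ι ι ℂ) : ℝ :=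
  sSup ((fun ρ => omega1 F (N ρ) - omega1 F ρ) '' {ρ | IsState ρ})

/-- Holevo–Helstrom success probability of discriminating two channels with probe `ρ`. -/
noncomputable def psuccPair (N M : Matrix ι ι ℂ → Matrix ι ι ℂ) (ρ : Matrix ι ι ℂ) : ℝ :=
  1/2 + (1/4) * traceNorm (N ρ - M ρ)

/-- Success probability of discriminating `N` from the set of channels `Free` with probe `ρ`. -/
noncomputable def psuccChan (N : Matrix ι ι ℂ → Matrix ι ι ℂ) (Free : Set (Channel ι))
    (ρ : Matrix ι ι ℂ) : ℝ :=
  sInf ((fun M : Channel ι => psuccPair N (⇑M.map) ρ) '' Free)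

/-- Maximum success probability of discriminating `N` from `Free` using probes from `F`. -/
noncomputable def psuccFF (N : Matrix ι ι ℂ → Matrix ι ι ℂ) (Free : Set (Channel ι))
    (F : Set (Matrix ι ι ℂ)) : ℝ :=
  sSup ((fun ρ => psuccChan N Free ρ) '' F)

/-- The set of incoherent states: states diagonal in the fixed (standard) basis. -/
def incoherentStates (d : ℕ) : Set (Matrix (Fin d) (Fin d) ℂ) :=
  {ρ | IsState ρ ∧ ρ.IsDiag}

/-! The replacement channel `R` onto the free state `M σ` satisfies `R ρ = M σ`, so the triangle
inequality and contractivity of the trace norm under `N` give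
`‖N ρ - R ρ‖₁ ≤ ‖N ρ - N σ‖₁ + ‖N σ - M σ‖₁ ≤ ‖ρ - σ‖₁ + ‖N σ - M σ‖₁`;
optimizing over `M` and then over the free probe `σ` yields the bound.
Both trace-norm facts follow from the Jordan decomposition `X = X⁺ - X⁻`, which minimizes
`tr P + tr Q` among all decompositions `X = P - Q` with `P, Q ≥ 0`. -/

open scoped MatrixOrder
open Matrix

lemma traceNorm_eq_re_trace_abs (A : Matrix ι ι ℂ) : traceNorm A = (CFC.abs A).trace.re := by
  have h := posSemidef_conjTranspose_mul_self A
  rw [CFC.abs, CFC.sqrt_eq_cfc, star_eq_conjTranspose, cfc_nnreal_eq_real _ _ h.nonneg,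
    h.1.cfc_eq, traceNorm]
  simp only [IsHermitian.cfc, Unitary.conjStarAlgAut_apply]
  congr 4
  funext i j
  simp [diagonal_apply, max_eq_left (h.eigenvalues_nonneg i)]

lemma traceNorm_nonneg (A : Matrix ι ι ℂ) : 0 ≤ traceNorm A := by
  rw [traceNorm_eq_re_trace_abs]
  exact (Complex.nonneg_iff.mp (nonneg_iff_posSemidef.mp (CFC.abs_nonneg A)).trace_nonneg).1

lemma traceNorm_eq_posPart_add_negPart {X : Matrix ι ι ℂ} (hX : X.IsHermitian) :
    traceNorm X = (X⁺).trace.re + (X⁻).trace.re := by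
  rw [traceNorm_eq_re_trace_abs, ← CFC.posPart_add_negPart X hX.isSelfAdjoint, trace_add,
    Complex.add_re]

lemma Matrix.PosSemidef.trace_mul_nonneg {𝕜 : Type*} [RCLike 𝕜] {A B : Matrix ι ι 𝕜}
    (hA : A.PosSemidef) (hB : B.PosSemidef) : 0 ≤ (A * B).trace := by
  have hR : CFC.sqrt A * CFC.sqrt A = A := CFC.sqrt_mul_sqrt_self A hA.nonneg
  have hRh : (CFC.sqrt A)ᴴ = CFC.sqrt A := (CFC.sqrt_nonneg A).isSelfAdjoint
  have hconj : (CFC.sqrt A * B * CFC.sqrt A).PosSemidef := by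
    simpa only [hRh] using hB.conjTranspose_mul_mul_same (CFC.sqrt A)
  rw [← hR, mul_assoc, trace_mul_comm]
  exact hconj.trace_nonneg

lemma traceNorm_sub_le {P Q : Matrix ι ι ℂ} (hP : P.PosSemidef) (hQ : Q.PosSemidef) :
    traceNorm (P - Q) ≤ P.trace.re + Q.trace.re := by
  set X := P - Q
  have hX : IsSelfAdjoint X := (hP.1.sub hQ.1).isSelfAdjoint
  have hcont (f : ℝ → ℝ) : ContinuousOn f (spectrum ℝ X) := X.finite_real_spectrum.continuousOn f
  set s : ℝ → ℝ := fun x => if 0 ≤ x then 1 else -1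
  set S := cfc s X with hS
  -- `S` is the sign of `X`: `-1 ≤ S ≤ 1` and `S * X = |X|`, so `tr |X| = tr (S P) - tr (S Q)`.
  have hSX : S * X = CFC.abs X := by
    rw [CFC.abs_eq_cfc_norm X hX, hS, show cfc s X * X = cfc (fun x => s x * x) X by
      rw [cfc_mul s (fun x => x) X (hcont s) (hcont _), cfc_id' ℝ X]]
    refine cfc_congr fun x _ => ?_
    by_cases hx : 0 ≤ x <;> simp [s, hx, abs_of_nonneg, abs_of_neg, not_le.mp]
  have h1 : 0 ≤ 1 - S := by
    rw [hS, ← cfc_one ℝ X, ← cfc_sub (a := X) 1 s (hcont _) (hcont s)]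
    refine cfc_nonneg fun x _ => ?_
    by_cases hx : 0 ≤ x <;> simp [s, hx]
  have h2 : 0 ≤ 1 + S := by
    rw [hS, ← cfc_one ℝ X, ← cfc_add (a := X) 1 s (hcont _) (hcont s)]
    refine cfc_nonneg fun x _ => ?_
    by_cases hx : 0 ≤ x <;> simp [s, hx]
  have hgap : P.trace + Q.trace - (CFC.abs X).trace
      = ((1 - S) * P).trace + ((1 + S) * Q).trace := by
    rw [← hSX]
    simp only [X, trace_add, trace_sub, mul_sub, sub_mul, add_mul, one_mul]
    ring
  have key : (CFC.abs X).trace ≤ P.trace + Q.trace := by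
    refine sub_nonneg.mp (hgap ▸ add_nonneg ?_ ?_)
    · exact (nonneg_iff_posSemidef.mp h1).trace_mul_nonneg hP
    · exact (nonneg_iff_posSemidef.mp h2).trace_mul_nonneg hQ
  rw [traceNorm_eq_re_trace_abs]
  exact (Complex.le_def.mp key).1 |>.trans_eq (Complex.add_re _ _)

lemma traceNorm_add_le {A B : Matrix ι ι ℂ} (hA : A.IsHermitian) (hB : B.IsHermitian) :
    traceNorm (A + B) ≤ traceNorm A + traceNorm B := by
  have hpos (X : Matrix ι ι ℂ) : (X⁺).PosSemidef := nonneg_iff_posSemidef.mp (CFC.posPart_nonneg X)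
  have hneg (X : Matrix ι ι ℂ) : (X⁻).PosSemidef := nonneg_iff_posSemidef.mp (CFC.negPart_nonneg X)
  have hsplit : (A⁺ + B⁺) - (A⁻ + B⁻) = A + B := by
    rw [add_sub_add_comm, CFC.posPart_sub_negPart A hA.isSelfAdjoint,
      CFC.posPart_sub_negPart B hB.isSelfAdjoint]
  rw [← hsplit, traceNorm_eq_posPart_add_negPart hA, traceNorm_eq_posPart_add_negPart hB]
  refine (traceNorm_sub_le ((hpos A).add (hpos B)) ((hneg A).add (hneg B))).trans_eq ?_
  simp only [trace_add, Complex.add_re]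
  ring

lemma traceNorm_map_le {Φ : Matrix ι ι ℂ →ₗ[ℂ] Matrix ι ι ℂ}
    (hΦ : ∀ P, P.PosSemidef → (Φ P).PosSemidef) (htr : ∀ A, (Φ A).trace = A.trace)
    {X : Matrix ι ι ℂ} (hX : X.IsHermitian) : traceNorm (Φ X) ≤ traceNorm X := by
  have hpos : (X⁺).PosSemidef := nonneg_iff_posSemidef.mp (CFC.posPart_nonneg X)
  have hneg : (X⁻).PosSemidef := nonneg_iff_posSemidef.mp (CFC.negPart_nonneg X)
  rw [← CFC.posPart_sub_negPart X hX.isSelfAdjoint, map_sub]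
  refine (traceNorm_sub_le (hΦ _ hpos) (hΦ _ hneg)).trans_eq ?_
  rw [htr, htr, CFC.posPart_sub_negPart X hX.isSelfAdjoint, traceNorm_eq_posPart_add_negPart hX]

lemma Channel.map_posSemidef (N : Channel ι) {P : Matrix ι ι ℂ} (hP : P.PosSemidef) :
    (N.map P).PosSemidef := by
  have h := N.cp 1 (P.submatrix Prod.snd Prod.snd) (hP.submatrix Prod.snd)
  exact h.submatrix fun i => ((0 : Fin 1), i)

lemma Channel.traceNorm_map_le (N : Channel ι) {X : Matrix ι ι ℂ} (hX : X.IsHermitian) :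
    traceNorm (N.map X) ≤ traceNorm X :=
  _root_.traceNorm_map_le (fun _ => N.map_posSemidef) N.tp hX

lemma one_half_le_psuccPair (N M : Matrix ι ι ℂ → Matrix ι ι ℂ) (τ : Matrix ι ι ℂ) :
    1 / 2 ≤ psuccPair N M τ := by
  have := traceNorm_nonneg (N τ - M τ)
  rw [psuccPair]
  linarith

lemma psuccPair_le_one (N M : Channel ι) {τ : Matrix ι ι ℂ} (hτ : IsState τ) :
    psuccPair N.map M.map τ ≤ 1 := by
  have := traceNorm_sub_le (N.map_posSemidef hτ.1) (M.map_posSemidef hτ.1)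
  rw [N.tp, M.tp, hτ.2, Complex.one_re] at this
  rw [psuccPair]
  linarith

lemma psuccChan_le_psuccPair {J : Set (Channel ι)} {M : Channel ι} (hM : M ∈ J)
    (N : Matrix ι ι ℂ → Matrix ι ι ℂ) (τ : Matrix ι ι ℂ) :
    psuccChan N J τ ≤ psuccPair N M.map τ :=
  csInf_le ⟨1 / 2, by rintro _ ⟨M', -, rfl⟩; exact one_half_le_psuccPair _ _ _⟩ ⟨M, hM, rfl⟩

lemma psuccChan_le_psuccPair_add_traceNorm {J : Set (Channel ι)} (N M : Channel ι)
    {R : Channel ι} (hR : R ∈ J) {σ : Matrix ι ι ℂ} (hRσ : ∀ τ, R.map τ = τ.trace • M.map σ)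
    {ρ : Matrix ι ι ℂ} (hρ : IsState ρ) (hσ : σ.PosSemidef) :
    psuccChan N.map J ρ ≤ psuccPair N.map M.map σ + traceNorm (ρ - σ) / 4 := by
  have hRρ : R.map ρ = M.map σ := by rw [hRσ, hρ.2, one_smul]
  have hNρ := (N.map_posSemidef hρ.1).1
  have hNσ := (N.map_posSemidef hσ).1
  have hMσ := (M.map_posSemidef hσ).1
  have htri : traceNorm (N.map ρ - M.map σ)
      ≤ traceNorm (N.map ρ - N.map σ) + traceNorm (N.map σ - M.map σ) := by
    simpa only [sub_add_sub_cancel] using traceNorm_add_le (hNρ.sub hNσ) (hNσ.sub hMσ)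
  have hcontr : traceNorm (N.map ρ - N.map σ) ≤ traceNorm (ρ - σ) := by
    simpa only [map_sub] using N.traceNorm_map_le (hρ.1.1.sub hσ.1)
  have := psuccChan_le_psuccPair hR N.map ρ
  rw [psuccPair, hRρ] at this
  rw [psuccPair]
  linarith

lemma psuccChan_le_psuccChan_add_traceNorm {F : Set (Matrix ι ι ℂ)} {J : Set (Channel ι)}
    (hJ : ∀ M ∈ J, ∀ σ ∈ F, M.map σ ∈ F)
    (hRepl : ∀ σ ∈ F, ∃ R ∈ J, ∀ τ, R.map τ = τ.trace • σ)
    (N : Channel ι) {ρ σ : Matrix ι ι ℂ} (hρ : IsState ρ) (hσF : σ ∈ F) (hσ : σ.PosSemidef) :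
    psuccChan N.map J ρ ≤ psuccChan N.map J σ + traceNorm (ρ - σ) / 4 := by
  obtain ⟨R₀, hR₀, -⟩ := hRepl σ hσF
  suffices psuccChan N.map J ρ - traceNorm (ρ - σ) / 4 ≤ psuccChan N.map J σ by linarith
  refine le_csInf ⟨_, R₀, hR₀, rfl⟩ ?_
  rintro _ ⟨M, hM, rfl⟩
  obtain ⟨R, hR, hRσ⟩ := hRepl _ (hJ M hM σ hσF)
  have := psuccChan_le_psuccPair_add_traceNorm N M hR hRσ hρ hσ
  linarith

lemma psuccChan_le_psuccFF {F : Set (Matrix ι ι ℂ)} {J : Set (Channel ι)}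
    (hF : ∀ σ ∈ F, IsState σ) (hJne : J.Nonempty) (N : Channel ι) {σ : Matrix ι ι ℂ}
    (hσ : σ ∈ F) : psuccChan N.map J σ ≤ psuccFF N.map J F := by
  obtain ⟨M, hM⟩ := hJne
  refine le_csSup ⟨1, ?_⟩ ⟨σ, hσ, rfl⟩
  rintro _ ⟨τ, hτ, rfl⟩
  exact (psuccChan_le_psuccPair hM _ τ).trans (psuccPair_le_one N M (hF τ hτ))

theorem psuccChan_sub_psuccFF_le_omega1 {F : Set (Matrix ι ι ℂ)} {J : Set (Channel ι)}
    (hF : ∀ σ ∈ F, IsState σ) (hFne : F.Nonempty)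
    (hJ : ∀ M ∈ J, ∀ σ ∈ F, M.map σ ∈ F)
    (hRepl : ∀ σ ∈ F, ∃ R ∈ J, ∀ τ, R.map τ = τ.trace • σ)
    (N : Channel ι) {ρ : Matrix ι ι ℂ} (hρ : IsState ρ) :
    psuccChan N.map J ρ - psuccFF N.map J F ≤ 1 / 2 * omega1 F ρ := by
  obtain ⟨σ₀, hσ₀⟩ := hFne
  have hJne : J.Nonempty := (hRepl σ₀ hσ₀).imp fun _ h => h.1
  have hbound : 4 * (psuccChan N.map J ρ - psuccFF N.map J F)
      ≤ sInf ((fun σ => traceNorm (ρ - σ)) '' F) := by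
    refine le_csInf ⟨_, σ₀, hσ₀, rfl⟩ ?_
    rintro _ ⟨σ, hσ, rfl⟩
    have := psuccChan_le_psuccChan_add_traceNorm hJ hRepl N hρ hσ (hF σ hσ).1
    have := psuccChan_le_psuccFF hF hJne N hσ
    linarith
  rw [omega1]
  linarith

lemma diagonal_diag_mem_incoherentStates {d : ℕ} {ρ : Matrix (Fin d) (Fin d) ℂ}
    (hρ : IsState ρ) : diagonal ρ.diag ∈ incoherentStates d :=
  ⟨⟨PosSemidef.diagonal fun _ => hρ.1.diag_nonneg, by rw [trace_diagonal]; exact hρ.2⟩,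
    isDiag_diagonal _⟩

/-- the advantage of a probe state `ρ` over incoherent probe states in
discriminating `N` from incoherence-preserving channels is bounded by `C₁(ρ)/2`. -/
theorem stmt13 {d : ℕ} (J : Set (Channel (Fin d)))
    (hJ : ∀ M ∈ J, ∀ ρ ∈ incoherentStates d, M.map ρ ∈ incoherentStates d)
    (hRepl : ∀ σ ∈ incoherentStates d, ∃ M ∈ J,
      ∀ τ : Matrix (Fin d) (Fin d) ℂ, M.map τ = τ.trace • σ)
    (N : Channel (Fin d)) (ρ : Matrix (Fin d) (Fin d) ℂ) (hρ : IsState ρ) :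
    psuccChan (⇑N.map) J ρ - psuccFF (⇑N.map) J (incoherentStates d)
      ≤ (1/2) * omega1 (incoherentStates d) ρ :=
  psuccChan_sub_psuccFF_le_omega1 (fun _ hσ => hσ.1) ⟨_, diagonal_diag_mem_incoherentStates hρ⟩
    hJ hRepl N hρ
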